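/- Let A, B ∈ ℝ^{d×d} be symmetric positive definite, set M = B^{1/2} A^{-1} B^{1/2}, and let β1 ≥ β2 ≥ … ≥ βd > 0 be the eigenvalues of M with a corresponding orthonormal basis of eigenvectors p1, …, pd. Fix a nonzero w ∈ ℝ^d, set r = B^{1/2} w and ξi = piᵀ r / ‖r‖, and define f(w') = (1/2)·w'ᵀ A w' − w'ᵀ B w for w' ∈ ℝ^d, whose minimum value is f* = −(1/2)·wᵀ B A^{-1} B w. Then f(β1 w) − f* = (‖r‖²/2)·Σ_{i=1}^d (ξi²/βi)·(β1 − βi)², and this quantity is at most ((wᵀ B w)/2) · β1² · Σ_{i=2}^d ξi²/βi; in particular min_{α∈ℝ} f(α w) − f* ≤ ((wᵀ B w)/2) · β1² · Σ_{i=2}^d ξi²/βi. -/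

import Mathlib

/-!
Write `S = B^{1/2}`, so that `r = S w`, and let `cᵢ = pᵢ ⬝ r` be the coordinates of `r` in the
eigenbasis of `M = S A⁻¹ S`. Since `B = S S`, `B A⁻¹ B = S M S` and `A = S M⁻¹ S`, all three
quadratic forms diagonalise: `wᵀBw = ‖r‖² = Σ cᵢ²`, `wᵀBA⁻¹Bw = rᵀMr = Σ βᵢ cᵢ²` and
`wᵀAw = rᵀM⁻¹r = Σ cᵢ²/βᵢ`. Hence `f(α w) - f* = Σ (cᵢ²/2βᵢ)(α - βᵢ)²` for every `α`. At `α = β₁`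
the first term vanishes and `(β₁ - βᵢ)² ≤ β₁²` because `0 < βᵢ ≤ β₁`.
-/

open Matrix Finset

/-- Euclidean norm of a vector in `ℝ^d`. -/
noncomputable def vnorm {n : Type*} [Fintype n] (x : n → ℝ) : ℝ := Real.sqrt (x ⬝ᵥ x)

open scoped ComplexOrder in
/-- The square root of a positive semidefinite matrix, as defined in the older Mathlib
(`Matrix.PosSemidef.sqrt`, removed since). -/
noncomputable def Matrix.PosSemidef.sqrt {n 𝕜 : Type*} [Fintype n] [RCLike 𝕜] [DecidableEq n]
    {A : Matrix n n 𝕜} (hA : A.PosSemidef) : Matrix n n 𝕜 :=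
  hA.1.eigenvectorUnitary.1 * diagonal ((↑) ∘ (√·) ∘ hA.1.eigenvalues) *
    (star hA.1.eigenvectorUnitary : Matrix n n 𝕜)

namespace Matrix.PosSemidef

open scoped ComplexOrder

variable {n 𝕜 : Type*} [Fintype n] [RCLike 𝕜] [DecidableEq n] {A : Matrix n n 𝕜}

theorem sqrt_conjTranspose (hA : A.PosSemidef) : hA.sqrtᴴ = hA.sqrt := by
  simp only [sqrt, conjTranspose_mul, diagonal_conjTranspose, star_eq_conjTranspose,
    conjTranspose_conjTranspose, Matrix.mul_assoc]
  congr 3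
  funext i
  simp

theorem sqrt_mul_self (hA : A.PosSemidef) : hA.sqrt * hA.sqrt = A := by
  set U : Matrix n n 𝕜 := hA.1.eigenvectorUnitary.1
  set D : Matrix n n 𝕜 := diagonal ((↑) ∘ (√·) ∘ hA.1.eigenvalues)
  have hU : star U * U = 1 := Matrix.UnitaryGroup.star_mul_self _
  have hD : D * D = diagonal (RCLike.ofReal ∘ hA.1.eigenvalues) := by
    rw [diagonal_mul_diagonal]
    congr 1; funext i
    simp [← RCLike.ofReal_mul, Real.mul_self_sqrt (hA.eigenvalues_nonneg i)]
  calc U * D * star U * (U * D * star U) = U * (D * (star U * U) * D) * star U := by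
        simp only [Matrix.mul_assoc]
    _ = A := by
        rw [hU, Matrix.mul_one, hD]
        conv_rhs => rw [hA.1.spectral_theorem, Unitary.conjStarAlgAut_apply]

theorem _root_.Matrix.PosDef.isUnit_sqrt (hA : A.PosDef) : IsUnit hA.posSemidef.sqrt :=
  isUnit_of_mul_isUnit_left (hA.posSemidef.sqrt_mul_self ▸ hA.isUnit)

end Matrix.PosSemidef

section Orthonormal

variable {n R : Type*} [Fintype n] [DecidableEq n] [CommRing R] {p : n → n → R}

theorem sum_dotProduct_smul_of_orthonormal
    (horth : ∀ i j, p i ⬝ᵥ p j = if i = j then 1 else 0) (y : n → R) :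
    ∑ i, (p i ⬝ᵥ y) • p i = y := by
  have hPPt : of p * (of p)ᵀ = 1 := by
    ext i j
    simpa [mul_apply, one_apply, dotProduct] using horth i j
  calc ∑ i, (p i ⬝ᵥ y) • p i = (of p)ᵀ *ᵥ (of p *ᵥ y) := by
        rw [mulVec_transpose, vecMul_eq_sum]; rfl
    _ = y := by rw [mulVec_mulVec, mul_eq_one_comm.mp hPPt, one_mulVec]

theorem dotProduct_mulVec_eq_sum_of_eigen
    (horth : ∀ i j, p i ⬝ᵥ p j = if i = j then 1 else 0) {M : Matrix n n R} {β : n → R}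
    (heig : ∀ i, M *ᵥ p i = β i • p i) (x y : n → R) :
    x ⬝ᵥ M *ᵥ y = ∑ i, β i * (p i ⬝ᵥ x) * (p i ⬝ᵥ y) := by
  conv_lhs => rw [← sum_dotProduct_smul_of_orthonormal horth y]
  simp only [mulVec_sum, mulVec_smul, heig, dotProduct_sum, dotProduct_smul, smul_eq_mul]
  exact Finset.sum_congr rfl fun i _ => by rw [dotProduct_comm x]; ring

theorem dotProduct_eq_sum_of_orthonormal
    (horth : ∀ i j, p i ⬝ᵥ p j = if i = j then 1 else 0) (x y : n → R) :
    x ⬝ᵥ y = ∑ i, (p i ⬝ᵥ x) * (p i ⬝ᵥ y) := by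
  simpa using dotProduct_mulVec_eq_sum_of_eigen horth (M := 1) (β := 1) (by simp) x y

end Orthonormal

theorem Matrix.inv_mulVec_of_mulVec_eq_smul {n K : Type*} [Fintype n] [DecidableEq n] [Field K]
    {M : Matrix n n K} (hM : IsUnit M.det) {v : n → K} {β : K} (hβ : β ≠ 0)
    (hv : M *ᵥ v = β • v) : M⁻¹ *ᵥ v = β⁻¹ • v := by
  have : v = β • M⁻¹ *ᵥ v := by
    rw [← mulVec_smul, ← hv, mulVec_mulVec, nonsing_inv_mul M hM, one_mulVec]
  rw [this, smul_smul, inv_mul_cancel₀ hβ, one_smul, ← this]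

theorem Matrix.dotProduct_transpose_mul_mul_mulVec {m n R : Type*} [Fintype m] [Fintype n]
    [CommSemiring R] (S : Matrix m n R) (N : Matrix m m R) (x y : n → R) :
    x ⬝ᵥ (Sᵀ * N * S) *ᵥ y = (S *ᵥ x) ⬝ᵥ N *ᵥ (S *ᵥ y) := by
  rw [← mulVec_mulVec, ← mulVec_mulVec, dotProduct_mulVec, ← mulVec_transpose, transpose_transpose]

theorem Matrix.mul_nonsing_inv_conj_mul {n R : Type*} [Fintype n] [DecidableEq n] [CommRing R]
    {S A : Matrix n n R} (hS : IsUnit S.det) (hA : IsUnit A.det) : S * (S * A⁻¹ * S)⁻¹ * S = A := by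
  rw [Matrix.mul_inv_rev, Matrix.mul_inv_rev, nonsing_inv_nonsing_inv A hA, ← Matrix.mul_assoc,
    ← Matrix.mul_assoc, mul_nonsing_inv S hS, Matrix.one_mul, Matrix.mul_assoc,
    nonsing_inv_mul S hS, Matrix.mul_one]

theorem quadratic_along_ray_sub_min_eq_sum {n : Type*} [Fintype n] [DecidableEq n]
    {A B S M : Matrix n n ℝ} {p : n → n → ℝ} {β : n → ℝ} (hA : IsUnit A.det) (hS : Sᵀ = S)
    (hSdet : IsUnit S.det) (hSS : S * S = B) (hM : M = S * A⁻¹ * S)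
    (horth : ∀ i j, p i ⬝ᵥ p j = if i = j then 1 else 0)
    (heig : ∀ i, M *ᵥ p i = β i • p i) (hβ : ∀ i, β i ≠ 0) (w : n → ℝ) (α : ℝ) :
    (1 / 2) * ((α • w) ⬝ᵥ A *ᵥ (α • w)) - (α • w) ⬝ᵥ B *ᵥ w
        - -(1 / 2) * (w ⬝ᵥ B *ᵥ (A⁻¹ *ᵥ (B *ᵥ w)))
      = ∑ i, (p i ⬝ᵥ S *ᵥ w) ^ 2 / (2 * β i) * (α - β i) ^ 2 := by
  have hconj (N : Matrix n n ℝ) : w ⬝ᵥ (S * N * S) *ᵥ w = (S *ᵥ w) ⬝ᵥ N *ᵥ (S *ᵥ w) := by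
    simpa only [hS] using dotProduct_transpose_mul_mul_mulVec S N w w
  have hMdet : IsUnit M.det := by
    rw [hM, det_mul, det_mul]
    exact (hSdet.mul (isUnit_nonsing_inv_det A hA)).mul hSdet
  have hwAw : w ⬝ᵥ A *ᵥ w = ∑ i, (β i)⁻¹ * (p i ⬝ᵥ S *ᵥ w) * (p i ⬝ᵥ S *ᵥ w) := by
    rw [← mul_nonsing_inv_conj_mul hSdet hA, ← hM, hconj,
      dotProduct_mulVec_eq_sum_of_eigen horth
        (fun i => inv_mulVec_of_mulVec_eq_smul hMdet (hβ i) (heig i))]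
  have hwBw : w ⬝ᵥ B *ᵥ w = ∑ i, (p i ⬝ᵥ S *ᵥ w) * (p i ⬝ᵥ S *ᵥ w) := by
    have := hconj 1
    rw [Matrix.mul_one, one_mulVec] at this
    rw [← hSS, this, dotProduct_eq_sum_of_orthonormal horth]
  have hwBABw : w ⬝ᵥ B *ᵥ (A⁻¹ *ᵥ (B *ᵥ w))
      = ∑ i, β i * (p i ⬝ᵥ S *ᵥ w) * (p i ⬝ᵥ S *ᵥ w) := by
    have hBAB : B * A⁻¹ * B = S * M * S := by rw [hM, ← hSS]; simp only [Matrix.mul_assoc]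
    rw [mulVec_mulVec, mulVec_mulVec, hBAB, hconj,
      dotProduct_mulVec_eq_sum_of_eigen horth heig]
  simp only [mulVec_smul, dotProduct_smul, smul_dotProduct, smul_eq_mul]
  rw [hwAw, hwBw, hwBABw]
  simp only [mul_sum, ← sum_sub_distrib]
  refine sum_congr rfl fun i _ => ?_
  field_simp [hβ i]
  ring

theorem vnorm_sq {n : Type*} [Fintype n] (x : n → ℝ) : vnorm x ^ 2 = x ⬝ᵥ x :=
  Real.sq_sqrt (by simpa using dotProduct_star_self_nonneg x)

theorem vnorm_sq_mul_div_vnorm_sq {n : Type*} [Fintype n] (q r : n → ℝ) :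
    vnorm r ^ 2 * (q ⬝ᵥ r / vnorm r) ^ 2 = (q ⬝ᵥ r) ^ 2 := by
  by_cases hr : r = 0
  · simp [hr]
  · have hvr : vnorm r ≠ 0 := fun h => hr (dotProduct_self_eq_zero.mp (by simp [← vnorm_sq, h]))
    field_simp

theorem sum_mul_sub_sq_le_of_antitone {d : ℕ} {a β : Fin (d + 1) → ℝ} (ha : ∀ i, 0 ≤ a i)
    (hβ : ∀ i, 0 < β i) (hanti : Antitone β) :
    ∑ i, a i * (β 0 - β i) ^ 2 ≤ β 0 ^ 2 * ∑ i ∈ univ.erase 0, a i := by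
  rw [← add_sum_erase _ _ (mem_univ 0), sub_self, mul_sum]
  simp only [ne_eq, OfNat.ofNat_ne_zero, not_false_eq_true, zero_pow, mul_zero, zero_add]
  refine sum_le_sum fun i _ => ?_
  have hsq : (β 0 - β i) ^ 2 ≤ β 0 ^ 2 := by
    nlinarith [hβ i, hanti (Fin.zero_le i)]
  nlinarith [ha i]

theorem stmt_7_general {d : ℕ} (A B : Matrix (Fin (d+1)) (Fin (d+1)) ℝ)
    (hA : A.PosDef) (hB : B.PosDef)
    (M : Matrix (Fin (d+1)) (Fin (d+1)) ℝ)
    (hM : M = (Matrix.PosSemidef.sqrt hB.posSemidef) * A⁻¹ * (Matrix.PosSemidef.sqrt hB.posSemidef))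
    (β : Fin (d+1) → ℝ) (p : Fin (d+1) → Fin (d+1) → ℝ)
    (hβpos : ∀ i, 0 < β i) (hanti : Antitone β)
    (horth : ∀ i j, p i ⬝ᵥ p j = if i = j then 1 else 0)
    (heig : ∀ i, M.mulVec (p i) = β i • p i)
    (w : Fin (d+1) → ℝ)
    (r : Fin (d+1) → ℝ) (hr : r = (Matrix.PosSemidef.sqrt hB.posSemidef).mulVec w)
    (ξ : Fin (d+1) → ℝ) (hξ : ∀ i, ξ i = (p i ⬝ᵥ r) / vnorm r)
    (f : (Fin (d+1) → ℝ) → ℝ)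
    (hf : ∀ w', f w' = (1/2) * (w' ⬝ᵥ A.mulVec w') - w' ⬝ᵥ B.mulVec w)
    (fstar : ℝ)
    (hfstar : fstar = -(1/2) * (w ⬝ᵥ B.mulVec ((A⁻¹).mulVec (B.mulVec w)))) :
    f (β 0 • w) - fstar = (vnorm r ^ 2 / 2) * ∑ i, (ξ i ^ 2 / β i) * (β 0 - β i) ^ 2 ∧
    (vnorm r ^ 2 / 2) * ∑ i, (ξ i ^ 2 / β i) * (β 0 - β i) ^ 2
      ≤ ((w ⬝ᵥ B.mulVec w) / 2) * β 0 ^ 2 * ∑ i ∈ Finset.univ.erase 0, ξ i ^ 2 / β i ∧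
    ∃ α : ℝ, f (α • w) - fstar
      ≤ ((w ⬝ᵥ B.mulVec w) / 2) * β 0 ^ 2 * ∑ i ∈ Finset.univ.erase 0, ξ i ^ 2 / β i := by
  set S := hB.posSemidef.sqrt
  have hS : Sᵀ = S := by
    simpa only [conjTranspose_eq_transpose_of_trivial] using hB.posSemidef.sqrt_conjTranspose
  have hSS : S * S = B := hB.posSemidef.sqrt_mul_self
  have hSdet : IsUnit S.det := (isUnit_iff_isUnit_det S).mp hB.isUnit_sqrt
  have hsub (α : ℝ) :
      f (α • w) - fstar = (vnorm r ^ 2 / 2) * ∑ i, ξ i ^ 2 / β i * (α - β i) ^ 2 := by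
    rw [hf, hfstar, quadratic_along_ray_sub_min_eq_sum ((isUnit_iff_isUnit_det A).mp hA.isUnit)
      hS hSdet hSS hM horth heig (fun i => (hβpos i).ne'), mul_sum]
    refine sum_congr rfl fun i _ => ?_
    rw [hξ, ← hr, ← vnorm_sq_mul_div_vnorm_sq (p i) r]
    ring
  have hwBw : w ⬝ᵥ B *ᵥ w = vnorm r ^ 2 := by
    rw [vnorm_sq, hr, ← hSS, ← mulVec_mulVec, dotProduct_mulVec, ← mulVec_transpose, hS]
  have hbound : (vnorm r ^ 2 / 2) * ∑ i, ξ i ^ 2 / β i * (β 0 - β i) ^ 2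
      ≤ ((w ⬝ᵥ B *ᵥ w) / 2) * β 0 ^ 2 * ∑ i ∈ univ.erase 0, ξ i ^ 2 / β i := by
    rw [hwBw, mul_assoc]
    exact mul_le_mul_of_nonneg_left (sum_mul_sub_sq_le_of_antitone
      (fun i => div_nonneg (sq_nonneg _) (hβpos i).le) hβpos hanti) (by positivity)
  exact ⟨hsub _, hbound, β 0, (hsub _).trans_le hbound⟩

/-- warm start for least squares: the suboptimality of the scaled
initializer `β₁ w` equals `(‖r‖²/2) Σᵢ (ξᵢ²/βᵢ)(β₁-βᵢ)²`, which is bounded by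
`((wᵀBw)/2) β₁² Σ_{i≥2} ξᵢ²/βᵢ`; in particular the best scaling `α w` obeys the
same bound. -/
theorem stmt_7 {d : ℕ} (A B : Matrix (Fin (d+1)) (Fin (d+1)) ℝ)
    (hA : A.PosDef) (hB : B.PosDef)
    (M : Matrix (Fin (d+1)) (Fin (d+1)) ℝ)
    (hM : M = (Matrix.PosSemidef.sqrt hB.posSemidef) * A⁻¹ * (Matrix.PosSemidef.sqrt hB.posSemidef))
    (β : Fin (d+1) → ℝ) (p : Fin (d+1) → Fin (d+1) → ℝ)
    (hβpos : ∀ i, 0 < β i) (hanti : Antitone β)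
    (horth : ∀ i j, p i ⬝ᵥ p j = if i = j then 1 else 0)
    (heig : ∀ i, M.mulVec (p i) = β i • p i)
    (w : Fin (d+1) → ℝ) (hw : w ≠ 0)
    (r : Fin (d+1) → ℝ) (hr : r = (Matrix.PosSemidef.sqrt hB.posSemidef).mulVec w)
    (ξ : Fin (d+1) → ℝ) (hξ : ∀ i, ξ i = (p i ⬝ᵥ r) / vnorm r)
    (f : (Fin (d+1) → ℝ) → ℝ)
    (hf : ∀ w', f w' = (1/2) * (w' ⬝ᵥ A.mulVec w') - w' ⬝ᵥ B.mulVec w)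
    (fstar : ℝ)
    (hfstar : fstar = -(1/2) * (w ⬝ᵥ B.mulVec ((A⁻¹).mulVec (B.mulVec w)))) :
    f (β 0 • w) - fstar = (vnorm r ^ 2 / 2) * ∑ i, (ξ i ^ 2 / β i) * (β 0 - β i) ^ 2 ∧
    (vnorm r ^ 2 / 2) * ∑ i, (ξ i ^ 2 / β i) * (β 0 - β i) ^ 2
      ≤ ((w ⬝ᵥ B.mulVec w) / 2) * β 0 ^ 2 * ∑ i ∈ Finset.univ.erase 0, ξ i ^ 2 / β i ∧
    ∃ α : ℝ, f (α • w) - fstar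
      ≤ ((w ⬝ᵥ B.mulVec w) / 2) * β 0 ^ 2 * ∑ i ∈ Finset.univ.erase 0, ξ i ^ 2 / β i :=
  stmt_7_general A B hA hB M hM β p hβpos hanti horth heig w r hr ξ hξ f hf fstar hfstar
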